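/- Let f ∈ F_q[t] with deg f ≥ 1, and assume that either q ≥ 3 or f ≠ b(t+c)² for all b, c ∈ F_q. Then f is irreducible if and only if S(f) = t^{deg f}. -/

import Mathlib

open Polynomial

variable {F : Type*} [Field F] [Fintype F] [DecidableEq F]

/-- `delta a f` is the natural number attached to the polynomial `f` via the
enumeration `a : Fin q ≃ F` of the field (`q = Fintype.card F`): if
`f = a_{i_0} + a_{i_1} t + ⋯ + a_{i_n} t^n` then `delta a f = i_0 + i_1 q + ⋯ + i_n q^n`.
In particular `delta a 0 = 0` whenever `a 0 = 0`. -/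
noncomputable def delta (a : Fin (Fintype.card F) ≃ F) (f : F[X]) : ℕ :=
  ∑ j ∈ Finset.range (f.natDegree + 1), (a.symm (f.coeff j) : ℕ) * Fintype.card F ^ j

/-- The inverse of `delta`: the polynomial whose `j`-th coefficient is the `j`-th
base-`q` digit of `m` (under the enumeration `a`). -/
noncomputable def deltaInv (a : Fin (Fintype.card F) ≃ F) (m : ℕ) : F[X] :=
  ∑ j ∈ Finset.range (m + 1),
    C (a ⟨m / Fintype.card F ^ j % Fintype.card F, Nat.mod_lt _ Fintype.card_pos⟩) * X ^ j

/-- The factorial of a polynomial: `f! = ∏_{g < f} (f - g)`, the product over all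
polynomials `g` with `delta a g < delta a f`; in particular `0! = 1`. -/
noncomputable def pfact (a : Fin (Fintype.card F) ≃ F) (f : F[X]) : F[X] :=
  ∏ m ∈ Finset.range (delta a f), (f - deltaInv a m)

/-- The Smarandache function: `S a 0 = 0`, and for `f ≠ 0`, `S a f` is the smallest
polynomial `g` (in the order given by `delta`) such that `f ∣ g!`. -/
noncomputable def S (a : Fin (Fintype.card F) ≃ F) (f : F[X]) : F[X] :=
  if f = 0 then 0 else deltaInv a (sInf {m : ℕ | f ∣ pfact a (deltaInv a m)})

set_option linter.unusedSectionVars false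

lemma two_le_q : 2 ≤ Fintype.card F := Fintype.one_lt_card

lemma lt_q_pow {K m : ℕ} (h : m < K) : m < Fintype.card F ^ K :=
  h.trans (Nat.lt_pow_self (two_le_q (F := F)))

lemma digit_sum {q : ℕ} (hq : 2 ≤ q) : ∀ K m, m < q ^ K →
    ∑ j ∈ Finset.range K, m / q ^ j % q * q ^ j = m := by
  intro K
  induction K with
  | zero => intro m hm; simp at hm; simp [hm]
  | succ K ih =>
    intro m hm
    rw [Finset.sum_range_succ']
    have h1 : ∀ j : ℕ, m / q ^ (j + 1) = (m / q) / q ^ j := by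
      intro j; rw [pow_succ', Nat.div_div_eq_div_mul]
    have h2 : ∑ j ∈ Finset.range K, m / q ^ (j + 1) % q * q ^ (j + 1)
        = q * ∑ j ∈ Finset.range K, (m / q) / q ^ j % q * q ^ j := by
      rw [Finset.mul_sum]
      refine Finset.sum_congr rfl fun j _ => ?_
      rw [h1, pow_succ']; ring
    have hmq : m / q < q ^ K := by
      rw [Nat.div_lt_iff_lt_mul (by omega)]
      calc m < q ^ (K + 1) := hm
      _ = q ^ K * q := pow_succ q K
    rw [h2, ih _ hmq]
    simp only [pow_zero, Nat.div_one, mul_one]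
    exact Nat.div_add_mod m q

lemma zero_digit (a : Fin (Fintype.card F) ≃ F) (h0 : a 0 = 0)
    {h : 0 % Fintype.card F < Fintype.card F} :
    a ⟨0 % Fintype.card F, h⟩ = 0 := by
  have h2 : (⟨0 % Fintype.card F, h⟩ : Fin (Fintype.card F)) = 0 := by
    apply Fin.ext; simp
  rw [h2, h0]

lemma coeff_deltaInv (a : Fin (Fintype.card F) ≃ F) (h0 : a 0 = 0) (m j : ℕ) :
    (deltaInv a m).coeff j =
      a ⟨m / Fintype.card F ^ j % Fintype.card F, Nat.mod_lt _ Fintype.card_pos⟩ := by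
  unfold deltaInv
  rw [finset_sum_coeff]
  by_cases hj : j ≤ m
  · rw [Finset.sum_eq_single j]
    · simp [coeff_C_mul, coeff_X_pow]
    · intro i _ hij
      simp [coeff_C_mul, coeff_X_pow, Ne.symm hij]
    · intro h; exact absurd (Finset.mem_range.mpr (by omega)) h
  · have hmj : m < Fintype.card F ^ j := lt_q_pow (show m < j by omega)
    have hdiv : m / Fintype.card F ^ j = 0 := Nat.div_eq_of_lt hmj
    simp only [hdiv]
    rw [zero_digit a h0, Finset.sum_eq_zero]
    intro i hi
    have : i ≤ m := by simpa [Nat.lt_succ_iff] using Finset.mem_range.mp hi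
    simp [coeff_C_mul, coeff_X_pow, show j ≠ i by omega]

lemma digit_eq_zero_of_lt (a : Fin (Fintype.card F) ≃ F) (h0 : a 0 = 0) {m j : ℕ}
    (hmj : m < Fintype.card F ^ j) :
    (deltaInv a m).coeff j = 0 := by
  rw [coeff_deltaInv a h0]
  have hdiv : m / Fintype.card F ^ j = 0 := Nat.div_eq_of_lt hmj
  simp only [hdiv]
  exact zero_digit a h0

lemma degree_deltaInv_lt (a : Fin (Fintype.card F) ≃ F) (h0 : a 0 = 0) {m K : ℕ}
    (hm : m < Fintype.card F ^ K) : (deltaInv a m).degree < (K : ℕ) := by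
  rw [degree_lt_iff_coeff_zero]
  intro j hj
  exact digit_eq_zero_of_lt a h0 (lt_of_lt_of_le hm
    (Nat.pow_le_pow_right Fintype.card_pos hj))

lemma natDegree_deltaInv_lt (a : Fin (Fintype.card F) ≃ F) (h0 : a 0 = 0) {m K : ℕ}
    (hK : 0 < K) (hm : m < Fintype.card F ^ K) : (deltaInv a m).natDegree < K := by
  by_cases h : deltaInv a m = 0
  · simp [h, hK]
  · exact natDegree_lt_iff_degree_lt h |>.mpr (by exact_mod_cast degree_deltaInv_lt a h0 hm)

lemma delta_deltaInv (a : Fin (Fintype.card F) ≃ F) (h0 : a 0 = 0) (m : ℕ) :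
    delta a (deltaInv a m) = m := by
  have hq2 : 2 ≤ Fintype.card F := two_le_q
  set D := (deltaInv a m).natDegree with hD
  have hmK : m < Fintype.card F ^ (max (D + 1) (m + 1)) := lt_q_pow (by omega)
  have hdig : ∀ j, (deltaInv a m).coeff j = 0 → m / Fintype.card F ^ j % Fintype.card F = 0 := by
    intro j hc
    rw [coeff_deltaInv a h0] at hc
    have h3 : (⟨m / Fintype.card F ^ j % Fintype.card F, Nat.mod_lt _ Fintype.card_pos⟩ :
        Fin (Fintype.card F)) = 0 := a.injective (by rw [hc, h0])
    simpa using congrArg Fin.val h3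
  have step1 : delta a (deltaInv a m) = ∑ j ∈ Finset.range (max (D + 1) (m + 1)),
      (a.symm ((deltaInv a m).coeff j) : ℕ) * Fintype.card F ^ j := by
    unfold delta
    rw [← hD]
    refine Finset.sum_subset (Finset.range_subset_range.mpr (show D + 1 ≤ max (D + 1) (m + 1) by omega))
      fun j _ hj => ?_
    have hjD : D < j := by
      by_contra hcon
      exact hj (Finset.mem_range.mpr (by omega))
    have hc : (deltaInv a m).coeff j = 0 := coeff_eq_zero_of_natDegree_lt hjD
    have hs : a.symm (0 : F) = 0 := by rw [← h0, Equiv.symm_apply_apply]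
    rw [hc, hs]
    simp
  have step2 : ∑ j ∈ Finset.range (max (D + 1) (m + 1)),
      (a.symm ((deltaInv a m).coeff j) : ℕ) * Fintype.card F ^ j
      = ∑ j ∈ Finset.range (max (D + 1) (m + 1)),
      m / Fintype.card F ^ j % Fintype.card F * Fintype.card F ^ j := by
    refine Finset.sum_congr rfl fun j _ => ?_
    rw [coeff_deltaInv a h0, Equiv.symm_apply_apply]
  rw [step1, step2]
  exact digit_sum hq2 _ m hmK

lemma geom_bound {q : ℕ} (hq : 2 ≤ q) : ∀ K, ∑ j ∈ Finset.range K, (q - 1) * q ^ j + 1 = q ^ K := by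
  intro K
  induction K with
  | zero => simp
  | succ K ih =>
    rw [Finset.sum_range_succ]
    have h1 : (1 : ℕ) + (q - 1) = q := by omega
    calc ∑ j ∈ Finset.range K, (q - 1) * q ^ j + (q - 1) * q ^ K + 1
        = (∑ j ∈ Finset.range K, (q - 1) * q ^ j + 1) + (q - 1) * q ^ K := by ring
      _ = q ^ K + (q - 1) * q ^ K := by rw [ih]
      _ = (1 + (q - 1)) * q ^ K := by ring
      _ = q ^ (K + 1) := by rw [h1, pow_succ, mul_comm]

lemma delta_lt (a : Fin (Fintype.card F) ≃ F) {K : ℕ} {f : F[X]}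
    (hf : f.natDegree < K) : delta a f < Fintype.card F ^ K := by
  have hq2 : 2 ≤ Fintype.card F := two_le_q
  have hb : delta a f ≤ ∑ j ∈ Finset.range K, (Fintype.card F - 1) * Fintype.card F ^ j := by
    unfold delta
    refine le_trans (Finset.sum_le_sum fun j _ => ?_) (Finset.sum_le_sum_of_subset
      (Finset.range_subset_range.mpr (by omega)))
    have := (a.symm (f.coeff j)).is_lt
    exact Nat.mul_le_mul_right _ (by omega)
  have := geom_bound hq2 K
  omega

lemma deltaInv_delta (a : Fin (Fintype.card F) ≃ F) (h0 : a 0 = 0) (f : F[X]) :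
    deltaInv a (delta a f) = f := by
  classical
  set K := f.natDegree + 1 with hK
  haveI : Fintype (degreeLT F K) := Fintype.ofEquiv _ (degreeLTEquiv F K).toEquiv.symm
  let φ : Fin (Fintype.card F ^ K) → degreeLT F K := fun i =>
    ⟨deltaInv a i, by rw [mem_degreeLT]; exact degree_deltaInv_lt a h0 i.isLt⟩
  have hinj : Function.Injective φ := by
    intro i j hij
    have h2 : deltaInv a (i : ℕ) = deltaInv a (j : ℕ) := congrArg Subtype.val hij
    have h3 := congrArg (delta a) h2
    rw [delta_deltaInv a h0, delta_deltaInv a h0] at h3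
    exact Fin.ext h3
  have hcard : Fintype.card (degreeLT F K) = Fintype.card F ^ K := by
    rw [Fintype.card_congr (degreeLTEquiv F K).toEquiv, Fintype.card_fun]
    simp
  have hbij : Function.Bijective φ :=
    (Fintype.bijective_iff_injective_and_card φ).2 ⟨hinj, by simp [hcard]⟩
  obtain ⟨i, hi⟩ := hbij.2 ⟨f, by
    rw [mem_degreeLT]
    exact lt_of_le_of_lt degree_le_natDegree (by exact_mod_cast Nat.lt_succ_self _)⟩
  have hfi : deltaInv a (i : ℕ) = f := congrArg Subtype.val hi
  rw [← hfi, delta_deltaInv a h0, hfi]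

lemma delta_injective (a : Fin (Fintype.card F) ≃ F) (h0 : a 0 = 0) :
    Function.Injective (delta a) := by
  intro f g hfg
  rw [← deltaInv_delta a h0 f, ← deltaInv_delta a h0 g, hfg]

lemma delta_X_pow (a : Fin (Fintype.card F) ≃ F) (h0 : a 0 = 0) (h1 : a 1 = 1) (n : ℕ) :
    delta a ((X : F[X]) ^ n) = Fintype.card F ^ n := by
  have hq2 : 2 ≤ Fintype.card F := two_le_q
  unfold delta
  rw [natDegree_X_pow, Finset.sum_range_succ]
  have hs : a.symm (0 : F) = 0 := by rw [← h0, Equiv.symm_apply_apply]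
  have hs1 : a.symm (1 : F) = 1 := by rw [← h1, Equiv.symm_apply_apply]
  have hz : ∑ j ∈ Finset.range n, (a.symm (((X : F[X]) ^ n).coeff j) : ℕ) * Fintype.card F ^ j = 0 := by
    refine Finset.sum_eq_zero fun j hj => ?_
    have : j ≠ n := by have := Finset.mem_range.mp hj; omega
    rw [coeff_X_pow, if_neg this, hs]
    simp
  rw [hz, coeff_X_pow, if_pos rfl, hs1]
  have : ((1 : Fin (Fintype.card F)) : ℕ) = 1 := by
    rw [Fin.val_one']
    exact Nat.mod_eq_of_lt (by omega)
  rw [this, one_mul, zero_add]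

lemma dvd_pfact_X_pow (a : Fin (Fintype.card F) ≃ F) (h0 : a 0 = 0) (h1 : a 1 = 1)
    (f : F[X]) (hf : f ≠ 0) (hn : 1 ≤ f.natDegree) :
    f ∣ pfact a (deltaInv a (Fintype.card F ^ f.natDegree)) := by
  set n := f.natDegree with hn'
  have hXn : deltaInv a (Fintype.card F ^ n) = X ^ n := by
    rw [← delta_X_pow a h0 h1 n, deltaInv_delta a h0]
  rw [hXn]
  unfold pfact
  rw [delta_X_pow a h0 h1 n]
  set c := f.leadingCoeff with hc
  have hc0 : c ≠ 0 := leadingCoeff_ne_zero.mpr hf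
  set m₀ : F[X] := f * C c⁻¹ with hm₀
  have hmon : m₀.Monic := monic_mul_leadingCoeff_inv hf
  have hm₀0 : m₀ ≠ 0 := hmon.ne_zero
  have hndeg : m₀.natDegree = n := by
    rw [hm₀, natDegree_mul_C (inv_ne_zero hc0)]
  have hdeg : m₀.degree = (n : ℕ) := by
    rw [← hndeg]; exact degree_eq_natDegree hm₀0
  set g₀ : F[X] := X ^ n - m₀ with hg₀
  have hg₀deg : g₀.degree < (n : ℕ) := by
    rw [hg₀]
    calc (X ^ n - m₀).degree < (X ^ n : F[X]).degree :=
          degree_sub_lt (by rw [degree_X_pow, hdeg]) (pow_ne_zero n X_ne_zero)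
            (by rw [monic_X_pow n |>.leadingCoeff, hmon.leadingCoeff])
      _ = (n : ℕ) := degree_X_pow n
  have hg₀nat : g₀.natDegree < n := by
    rcases eq_or_ne g₀ 0 with h | h
    · rw [h]; simpa using (show 0 < n by omega)
    · exact (natDegree_lt_iff_degree_lt h).mpr hg₀deg
  have hdelta : delta a g₀ < Fintype.card F ^ n := delta_lt a hg₀nat
  have hmem : delta a g₀ ∈ Finset.range (Fintype.card F ^ n) := Finset.mem_range.mpr hdelta
  have hfac : X ^ n - deltaInv a (delta a g₀) = m₀ := by
    rw [deltaInv_delta a h0, hg₀]; ring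
  have hdvd1 : f ∣ m₀ := ⟨C c⁻¹, rfl⟩
  calc f ∣ m₀ := hdvd1
    _ = X ^ n - deltaInv a (delta a g₀) := hfac.symm
    _ ∣ ∏ m ∈ Finset.range (Fintype.card F ^ n), ((X : F[X]) ^ n - deltaInv a m) :=
        Finset.dvd_prod_of_mem _ hmem

lemma not_dvd_pfact_small (a : Fin (Fintype.card F) ≃ F) (h0 : a 0 = 0)
    (f : F[X]) (hirr : Irreducible f) {m : ℕ} (hm : m < Fintype.card F ^ f.natDegree) :
    ¬ f ∣ pfact a (deltaInv a m) := by
  intro hdvd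
  set n := f.natDegree with hn'
  have hf0 : f ≠ 0 := hirr.ne_zero
  unfold pfact at hdvd
  rw [delta_deltaInv a h0] at hdvd
  obtain ⟨j, hj, hdj⟩ := hirr.prime.exists_mem_finset_dvd hdvd
  have hjm : j < m := Finset.mem_range.mp hj
  have hne : deltaInv a m - deltaInv a j ≠ 0 := by
    intro h
    have : deltaInv a m = deltaInv a j := by
      have := sub_eq_zero.mp h; exact this
    have h2 := congrArg (delta a) this
    rw [delta_deltaInv a h0, delta_deltaInv a h0] at h2
    omega
  have hdegm : (deltaInv a m).degree < (n : ℕ) := degree_deltaInv_lt a h0 hm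
  have hdegj : (deltaInv a j).degree < (n : ℕ) := degree_deltaInv_lt a h0 (by omega)
  have hdeg : (deltaInv a m - deltaInv a j).degree < (n : ℕ) :=
    lt_of_le_of_lt (degree_sub_le _ _) (max_lt hdegm hdegj)
  have := degree_le_of_dvd hdj hne
  rw [degree_eq_natDegree hf0] at this
  exact absurd (lt_of_le_of_lt this hdeg) (lt_irrefl _)

lemma exists_two_factors (f : F[X]) (hdeg : 1 ≤ f.natDegree)
    (hq : 3 ≤ Fintype.card F ∨ ∀ b c : F, f ≠ C b * (X + C c) ^ 2)
    (hred : ¬ Irreducible f) :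
    ∃ p₁ p₂ : F[X], p₁ ≠ 0 ∧ p₂ ≠ 0 ∧ p₁ ≠ p₂ ∧
      p₁.natDegree < f.natDegree ∧ p₂.natDegree < f.natDegree ∧ f ∣ p₁ * p₂ := by
  have hf0 : f ≠ 0 := fun h => by simp [h] at hdeg
  have hfu : ¬ IsUnit f := not_isUnit_of_natDegree_pos f (by omega)
  rw [irreducible_iff] at hred
  push_neg at hred
  obtain ⟨g, h, hfgh, hgu, hhu⟩ := hred hfu
  have hg0 : g ≠ 0 := fun hgz => hf0 (by rw [hfgh, hgz, zero_mul])
  have hh0 : h ≠ 0 := fun hhz => hf0 (by rw [hfgh, hhz, mul_zero])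
  have posdeg : ∀ p : F[X], p ≠ 0 → ¬ IsUnit p → 1 ≤ p.natDegree := by
    intro p hp0 hpu
    rcases Nat.eq_zero_or_pos p.natDegree with h' | h'
    · exfalso
      have hpc : p = C (p.coeff 0) := eq_C_of_natDegree_eq_zero h'
      have hc : p.coeff 0 ≠ 0 := fun hc => hp0 (by rw [hpc, hc, map_zero])
      exact hpu (by rw [hpc]; exact isUnit_C.mpr (isUnit_iff_ne_zero.mpr hc))
    · exact h'
  have hng : 1 ≤ g.natDegree := posdeg g hg0 hgu
  have hnh : 1 ≤ h.natDegree := posdeg h hh0 hhu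
  have hsum : f.natDegree = g.natDegree + h.natDegree := by
    rw [hfgh, natDegree_mul hg0 hh0]
  by_cases hgh : g = h
  · subst hgh
    by_cases h2 : 2 ≤ g.natDegree
    · refine ⟨g, X * g, hg0, mul_ne_zero X_ne_zero hg0, ?_, by omega, ?_, ⟨X, by rw [hfgh]; ring⟩⟩
      · intro he
        have := congrArg natDegree he
        rw [natDegree_mul X_ne_zero hg0, natDegree_X] at this
        omega
      · rw [natDegree_mul X_ne_zero hg0, natDegree_X]
        omega
    · have hng1 : g.natDegree = 1 := by omega
      rcases hq with hq3 | hqne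
      · obtain ⟨u, hu⟩ : ∃ u : F, u ∉ ({0, 1} : Finset F) := by
          by_contra hcon
          push_neg at hcon
          have hsub : (Finset.univ : Finset F) ⊆ {0, 1} := fun x _ => hcon x
          have := Finset.card_le_card hsub
          have h01 : ({0, 1} : Finset F).card ≤ 2 := Finset.card_insert_le 0 {1} |>.trans (by simp)
          rw [Finset.card_univ] at this
          omega
        simp only [Finset.mem_insert, Finset.mem_singleton, not_or] at hu
        obtain ⟨hu0, hu1⟩ := hu
        have hCu : (C u : F[X]) ≠ 0 := fun hc => hu0 (by rwa [C_eq_zero] at hc)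
        refine ⟨g, C u * g, hg0, mul_ne_zero hCu hg0, ?_, by omega, ?_, ⟨C u, by rw [hfgh]; ring⟩⟩
        · intro he
          have hz : (1 - C u) * g = 0 := by
            rw [sub_mul, one_mul, sub_eq_zero]
            exact he
          rcases mul_eq_zero.mp hz with hz' | hz'
          · have : (C u : F[X]) = C 1 := by rw [map_one]; linear_combination -hz'
            exact hu1 (C_injective this)
          · exact hg0 hz'
        · rw [natDegree_mul hCu hg0, natDegree_C]
          omega
      · exfalso
        have hdle : g.degree ≤ 1 := by
          rw [degree_eq_natDegree hg0, hng1]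
          exact_mod_cast le_rfl
        set g1 := g.coeff 1 with hg1def
        set g0 := g.coeff 0 with hg0def
        have hg1 : g1 ≠ 0 := by
          have := leadingCoeff_ne_zero.mpr hg0
          rwa [leadingCoeff, hng1] at this
        apply hqne (g1 ^ 2) (g0 * g1⁻¹)
        have hgeq : g = C g1 * X + C g0 := eq_X_add_C_of_degree_le_one hdle
        have key : C g1 * (X + C (g0 * g1⁻¹)) = g := by
          rw [hgeq, mul_add, ← C_mul]
          congr 2
          field_simp
        rw [hfgh, ← key, map_pow]
        ring
  · exact ⟨g, h, hg0, hh0, hgh, by omega, by omega, ⟨1, by rw [hfgh, mul_one]⟩⟩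

lemma dvd_pfact_of_reducible (a : Fin (Fintype.card F) ≃ F) (h0 : a 0 = 0)
    (f : F[X]) (hdeg : 1 ≤ f.natDegree)
    (hq : 3 ≤ Fintype.card F ∨ ∀ b c : F, f ≠ C b * (X + C c) ^ 2)
    (hred : ¬ Irreducible f) :
    f ∣ pfact a (deltaInv a (Fintype.card F ^ f.natDegree - 1)) := by
  set n := f.natDegree with hn
  obtain ⟨p₁, p₂, hp₁0, hp₂0, hne, hd₁, hd₂, hdvd⟩ := exists_two_factors f hdeg hq hred
  have hq2 : 2 ≤ Fintype.card F := two_le_q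
  have hqn : 2 ≤ Fintype.card F ^ n :=
    le_trans hq2 (Nat.le_self_pow (by omega) _)
  set N := Fintype.card F ^ n - 1 with hN
  set G := deltaInv a N with hG
  unfold pfact
  rw [delta_deltaInv a h0]
  have hNlt : N < Fintype.card F ^ n := by omega
  have hGdeg : G.natDegree < n := natDegree_deltaInv_lt a h0 (by omega) hNlt
  have hGN : delta a G = N := delta_deltaInv a h0 N
  have key : ∀ p : F[X], p ≠ 0 → p.natDegree < n →
      delta a (G - p) ∈ Finset.range N ∧ G - deltaInv a (delta a (G - p)) = p := by
    intro p hp0 hpd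
    have hdsub : (G - p).natDegree < n :=
      lt_of_le_of_lt (natDegree_sub_le _ _) (by omega)
    have hlt : delta a (G - p) < Fintype.card F ^ n := delta_lt a hdsub
    have hneG : G - p ≠ G := by
      intro hcon
      apply hp0
      have := congrArg (fun x => G - x) hcon
      simpa using (sub_eq_self.mp hcon)
    have hneN : delta a (G - p) ≠ N := by
      intro hcon
      exact hneG (delta_injective a h0 (by rw [hcon, hGN]))
    refine ⟨Finset.mem_range.mpr (by omega), ?_⟩
    rw [deltaInv_delta a h0]
    ring
  obtain ⟨hm₁, he₁⟩ := key p₁ hp₁0 hd₁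
  obtain ⟨hm₂, he₂⟩ := key p₂ hp₂0 hd₂
  have hmne : delta a (G - p₁) ≠ delta a (G - p₂) := by
    intro hcon
    have := delta_injective a h0 hcon
    apply hne
    have := congrArg (fun x => G - x) this
    simpa using this
  calc f ∣ p₁ * p₂ := hdvd
    _ = (G - deltaInv a (delta a (G - p₁))) * (G - deltaInv a (delta a (G - p₂))) := by
        rw [he₁, he₂]
    _ = ∏ m ∈ ({delta a (G - p₁), delta a (G - p₂)} : Finset ℕ), (G - deltaInv a m) := by
        rw [Finset.prod_pair hmne]
    _ ∣ ∏ m ∈ Finset.range N, (G - deltaInv a m) := by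
        refine Finset.prod_dvd_prod_of_subset _ _ _ ?_
        intro x hx
        rcases Finset.mem_insert.mp hx with h | h
        · rw [h]; exact hm₁
        · rw [Finset.mem_singleton.mp h]; exact hm₂

/-- Proposition 3.3: for `f` of degree `≥ 1` with either `q ≥ 3` or `f ≠ b (t + c)²`
for all `b, c ∈ F_q`, the polynomial `f` is irreducible iff `S(f) = t^{deg f}`. -/
theorem irreducible_iff_smarandache (a : Fin (Fintype.card F) ≃ F) (h0 : a 0 = 0)
    (h1 : a 1 = 1) (f : F[X]) (hdeg : 1 ≤ f.natDegree)
    (hq : 3 ≤ Fintype.card F ∨ ∀ b c : F, f ≠ C b * (X + C c) ^ 2) :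
    Irreducible f ↔ S a f = X ^ f.natDegree := by
  have hf0 : f ≠ 0 := fun h => by simp [h] at hdeg
  have hq2 : 2 ≤ Fintype.card F := two_le_q
  constructor
  · intro hirr
    have hmem : Fintype.card F ^ f.natDegree ∈ {m : ℕ | f ∣ pfact a (deltaInv a m)} :=
      dvd_pfact_X_pow a h0 h1 f hf0 hdeg
    have hlow : ∀ m ∈ {m : ℕ | f ∣ pfact a (deltaInv a m)}, Fintype.card F ^ f.natDegree ≤ m := by
      intro m hm
      by_contra hcon
      exact not_dvd_pfact_small a h0 f hirr (by omega) hm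
    have hinf : sInf {m : ℕ | f ∣ pfact a (deltaInv a m)} = Fintype.card F ^ f.natDegree :=
      le_antisymm (Nat.sInf_le hmem) (hlow _ (Nat.sInf_mem ⟨_, hmem⟩))
    rw [S, if_neg hf0, hinf, ← delta_X_pow a h0 h1 f.natDegree, deltaInv_delta a h0]
  · intro hS
    by_contra hred
    have hdvd := dvd_pfact_of_reducible a h0 f hdeg hq hred
    have hle : sInf {m : ℕ | f ∣ pfact a (deltaInv a m)} ≤ Fintype.card F ^ f.natDegree - 1 :=
      Nat.sInf_le hdvd
    have hqn : 1 ≤ Fintype.card F ^ f.natDegree := Nat.one_le_pow _ _ (by omega)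
    have hdegS : (S a f).degree < (f.natDegree : ℕ) := by
      rw [S, if_neg hf0]
      exact degree_deltaInv_lt a h0 (by omega)
    rw [hS, degree_X_pow] at hdegS
    exact lt_irrefl _ hdegS
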